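/- arXiv:1007.2616 — 6 statements merged into one kernel-verified Lean document; each statement's English description precedes it below -/
import Mathlib

section
/- Let $G$ be a topological group acting on locally compact Hausdorff spaces $P_1$ and $P_2$ such that each $P_i \to X_i := P_i/G$ is a principal $G$-bundle (the actions are free and proper). Suppose $f : X_1 \to X_2$ and $\tilde f : P_1 \to P_2$ are continuous maps with $\tilde f$ $G$-equivariant and $q_2 \circ \tilde f = f \circ q_1$, where $q_i : P_i \to X_i$ are the quotient maps. Then for any compact sets $K \subseteq X_1$ and $L \subseteq P_2$, the set $q_1^{-1}(K) \cap \tilde f^{-1}(L)$ is a compact subset of $P_1$. -/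
/-- For principal `G`-bundles `qᵢ : Pᵢ → Pᵢ/G` (free and proper actions on
locally compact Hausdorff spaces), an equivariant map `ft : P₁ → P₂` covering a continuous
map `f` of the orbit spaces, and compact sets `K ⊆ P₁/G`, `L ⊆ P₂`, the set
`q₁⁻¹(K) ∩ ft⁻¹(L)` is compact. -/
theorem stmt0 {G P₁ P₂ : Type*} [Group G] [TopologicalSpace G]
    [TopologicalSpace P₁] [TopologicalSpace P₂]
    [T2Space P₁] [T2Space P₂] [LocallyCompactSpace P₁] [LocallyCompactSpace P₂]
    [MulAction G P₁] [MulAction G P₂]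
    (hc₁ : Continuous fun p : G × P₁ => p.1 • p.2)
    (hc₂ : Continuous fun p : G × P₂ => p.1 • p.2)
    (hfree₁ : ∀ (g : G) (p : P₁), g • p = p → g = 1)
    (hfree₂ : ∀ (g : G) (p : P₂), g • p = p → g = 1)
    (hprop₁ : IsProperMap fun gp : G × P₁ => (gp.1 • gp.2, gp.2))
    (hprop₂ : IsProperMap fun gp : G × P₂ => (gp.1 • gp.2, gp.2))
    (f : Quotient (MulAction.orbitRel G P₁) → Quotient (MulAction.orbitRel G P₂))
    (hf : Continuous f)
    (ft : P₁ → P₂) (hft : Continuous ft)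
    (hequiv : ∀ (g : G) (p : P₁), ft (g • p) = g • ft p)
    (hcomm : ∀ p : P₁,
      (Quotient.mk (MulAction.orbitRel G P₂) (ft p)) = f (Quotient.mk (MulAction.orbitRel G P₁) p))
    (K : Set (Quotient (MulAction.orbitRel G P₁))) (hK : IsCompact K)
    (L : Set P₂) (hL : IsCompact L) :
    IsCompact ((Quotient.mk (MulAction.orbitRel G P₁) ⁻¹' K) ∩ ft ⁻¹' L) := by
  haveI : ContinuousSMul G P₁ := ⟨hc₁⟩
  haveI : ContinuousSMul G P₂ := ⟨hc₂⟩
  haveI : ProperSMul G P₁ := ⟨hprop₁⟩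
  haveI : T2Space (Quotient (MulAction.orbitRel G P₁)) :=
    t2Space_quotient_mulAction_of_properSMul
  set q : P₁ → Quotient (MulAction.orbitRel G P₁) := Quotient.mk _ with hq
  have hqcont : Continuous q := continuous_quotient_mk'
  have hqopen : IsOpenMap q := MulAction.isOpenQuotientMap_quotientMk.isOpenMap
  -- the set in question is closed
  have hSclosed : IsClosed ((q ⁻¹' K) ∩ ft ⁻¹' L) :=
    (hK.isClosed.preimage hqcont).inter (hL.isClosed.preimage hft)
  -- find a compact set C with K ⊆ q '' C
  have hNx : ∀ x ∈ K, ∃ N : Set P₁, IsCompact N ∧ q '' N ∈ nhds x := by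
    intro x _
    obtain ⟨N, hNc, hNn⟩ := exists_compact_mem_nhds x.out
    refine ⟨N, hNc, ?_⟩
    have := hqopen.image_mem_nhds hNn
    simpa only [hq, Quotient.out_eq] using this
  choose! N hNc hNn using hNx
  obtain ⟨t, htK, htcov⟩ := hK.elim_nhds_subcover (fun x => q '' N x) (fun x hx => hNn x hx)
  set C : Set P₁ := ⋃ x ∈ t, N x with hC
  have hCc : IsCompact C := t.isCompact_biUnion (fun x hx => hNc x (htK x hx))
  have hKC : K ⊆ q '' C := by
    intro x hx
    obtain ⟨y, hyt, hy⟩ := Set.mem_iUnion₂.1 (htcov hx)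
    obtain ⟨p, hp, hpq⟩ := hy
    exact ⟨p, Set.mem_iUnion₂.2 ⟨y, hyt, hp⟩, hpq⟩
  -- the set of group elements moving ft '' C into L
  set M : Set G := Prod.fst '' ((fun gp : G × P₂ => (gp.1 • gp.2, gp.2)) ⁻¹' (L ×ˢ (ft '' C)))
    with hM
  have hMc : IsCompact M :=
    (hprop₂.isCompact_preimage (hL.prod (hCc.image hft))).image continuous_fst
  -- the big compact set M • C
  have hbig : IsCompact ((fun gp : G × P₁ => gp.1 • gp.2) '' (M ×ˢ C)) :=
    (hMc.prod hCc).image hc₁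
  refine hbig.of_isClosed_subset hSclosed ?_
  rintro p ⟨hpK, hpL⟩
  obtain ⟨c, hcC, hcq⟩ := hKC hpK
  have : (MulAction.orbitRel G P₁) c p := Quotient.exact hcq
  obtain ⟨g, hg⟩ : c ∈ MulAction.orbit G p := this
  have hpg : p = g⁻¹ • c := by rw [← hg, inv_smul_smul]
  have hginv : g⁻¹ ∈ M := by
    refine ⟨(g⁻¹, ft c), ?_, rfl⟩
    refine Set.mem_preimage.2 ⟨?_, ⟨c, hcC, rfl⟩⟩
    have : ft p = g⁻¹ • ft c := by rw [hpg, hequiv]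
    simpa [← this] using hpL
  exact ⟨(g⁻¹, c), ⟨hginv, hcC⟩, hpg.symm⟩
end

section
/- Let a locally compact group $G$ act freely and properly on a topological graph $E = (E^0, E^1, s, r)$, with quotient maps $q^0 : E^0 \to E^0/G$ and $q^1 : E^1 \to E^1/G$. Then the quotient $(E^0/G, E^1/G, \bar s, \bar r)$, with $\bar s, \bar r$ induced by $s, r$, is again a topological graph; in particular, the induced source map $\bar s : E^1/G \to E^0/G$ is a local homeomorphism. -/
/-!
A free proper action admits slices in the following weak sense: every point `y` has a
neighbourhood `V` such that only group elements close to `1` move a point of `V` back into `V`.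
Given `e ∈ E¹`, choose a neighbourhood `U` of `e` on which `s` is injective and then `N ∋ 1`
and `W ∋ e` with `N • W ⊆ U`. If `V` is such a slice around `s e` for `N`, then on
`T = U ∩ W ∩ s⁻¹ V` any two edges with `G`-related sources `g • s e₂ = s e₁` have `g ∈ N`,
so `g • e₂` and `e₁` both lie in `U`, have the same source and hence coincide. Thus `s̄` is
locally injective; it is continuous and open because the orbit maps are open quotient maps,
so it is a local homeomorphism. The remaining properties of the quotient are standard facts
about proper actions.
-/

open Filter Topology Set MulAction

section

variable {G X Y : Type*} [Group G] [MulAction G X] [MulAction G Y]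

namespace MulActionHom

def orbitQuotientMap (f : X →[G] Y) : Quotient (orbitRel G X) → Quotient (orbitRel G Y) :=
  Quotient.map f fun _ _ ⟨g, hg⟩ => ⟨g, by simp [← hg]⟩

variable (f : X →[G] Y)

@[simp]
theorem orbitQuotientMap_mk (x : X) :
    f.orbitQuotientMap (Quotient.mk _ x) = Quotient.mk _ (f x) :=
  rfl

end MulActionHom

variable [TopologicalSpace X] [TopologicalSpace Y]

theorem isLocalHomeomorph_of_isLocallyInjective {f : X → Y} (hc : Continuous f)
    (ho : IsOpenMap f) (hi : IsLocallyInjective f) : IsLocalHomeomorph f := by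
  refine isLocalHomeomorph_iff_isOpenEmbedding_restrict.mpr fun x => ?_
  obtain ⟨U, hU, hxU, hinj⟩ := hi x
  exact ⟨U, hU.mem_nhds hxU, .of_continuous_injective_isOpenMap
    (hc.comp continuous_subtype_val) (injOn_iff_injective.mp hinj) (ho.domRestrict hU)⟩

theorem ProperSMul.exists_nhds_forall_smul_mem_imp_mem [TopologicalSpace G] [ProperSMul G Y]
    (hfree : ∀ (g : G) (y : Y), g • y = y → g = 1) (y : Y) {N : Set G} (hN : N ∈ 𝓝 1) :
    ∃ V ∈ 𝓝 y, ∀ z ∈ V, ∀ g : G, g • z ∈ V → g ∈ N := by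
  set K := (fun gz : G × Y => (gz.1 • gz.2, gz.2)) '' {gz | gz.1 ∉ interior N}
  have hK : IsClosed K := isProperMap_smul_pair.isClosedMap _
    (isOpen_interior.isClosed_compl.preimage continuous_fst)
  -- the only pair over `(y, y)` is `(1, y)`, and `1` lies in the interior of `N`
  have hyK : (y, y) ∉ K := by
    rintro ⟨⟨g, z⟩, hg, hgz⟩
    obtain ⟨hgz, rfl⟩ := Prod.ext_iff.mp hgz
    exact hg (hfree g z hgz ▸ mem_interior_iff_mem_nhds.mpr hN)
  obtain ⟨V₁, hV₁, V₂, hV₂, hV⟩ := mem_nhds_prod_iff.mp (hK.isOpen_compl.mem_nhds hyK)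
  refine ⟨V₁ ∩ V₂, inter_mem hV₁ hV₂, fun z hz g hgz => interior_subset ?_⟩
  by_contra hg
  exact hV ⟨hgz.1, hz.2⟩ ⟨(g, z), hg, rfl⟩

namespace MulActionHom

variable (f : X →[G] Y)

theorem continuous_orbitQuotientMap (hf : Continuous f) : Continuous f.orbitQuotientMap :=
  hf.quotient_map' _

theorem isOpenMap_orbitQuotientMap [ContinuousConstSMul G Y] (hf : IsOpenMap f) :
    IsOpenMap f.orbitQuotientMap := by
  intro O hO
  rw [← image_preimage_eq O Quotient.mk_surjective, image_image]
  simp only [orbitQuotientMap_mk]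
  rw [← image_image (Quotient.mk _) f]
  exact isOpenQuotientMap_quotientMk.isOpenMap _ (hf _ (hO.preimage continuous_quot_mk))

variable [TopologicalSpace G]

theorem isLocallyInjective_orbitQuotientMap [ContinuousSMul G X] [ProperSMul G Y]
    (hfree : ∀ (g : G) (y : Y), g • y = y → g = 1) (hf : Continuous f)
    (hinj : IsLocallyInjective f) : IsLocallyInjective f.orbitQuotientMap := by
  refine isLocallyInjective_iff_nhds.mpr <| Quot.mk_surjective.forall.mpr fun x => ?_
  obtain ⟨U, hU, hxU, hfU⟩ := hinj x
  have hsmul : ∀ᶠ gz : G × X in 𝓝 1 ×ˢ 𝓝 x, gz.1 • gz.2 ∈ U := by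
    rw [← nhds_prod_eq]
    exact (continuous_smul.tendsto' (1, x) x (one_smul G x)).eventually (hU.mem_nhds hxU)
  obtain ⟨N, hN, W, hW, hNW⟩ := eventually_prod_iff.mp hsmul
  obtain ⟨V, hV, hVN⟩ := ProperSMul.exists_nhds_forall_smul_mem_imp_mem hfree (f x) hN
  set T := {z | W z} ∩ U ∩ f ⁻¹' V
  have hT : T ∈ 𝓝 x := inter_mem (inter_mem hW (hU.mem_nhds hxU)) (hf.continuousAt hV)
  refine ⟨Quotient.mk _ '' T, isOpenQuotientMap_quotientMk.isOpenMap.image_mem_nhds hT, ?_⟩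
  rintro _ ⟨x₁, ⟨⟨-, hx₁U⟩, hx₁V⟩, rfl⟩ _ ⟨x₂, ⟨⟨hx₂W, -⟩, hx₂V⟩, rfl⟩ h
  obtain ⟨g, hg : g • f x₂ = f x₁⟩ := Quotient.exact h
  have hgN : N g := hVN (f x₂) hx₂V g (hg ▸ hx₁V)
  have hx₁ : x₁ = g • x₂ :=
    hfU hx₁U (hNW hgN hx₂W) (by rw [map_smul]; exact hg.symm)
  exact Quotient.sound ⟨g, hx₁.symm⟩

theorem isLocalHomeomorph_orbitQuotientMap [ContinuousSMul G X] [ProperSMul G Y]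
    (hfree : ∀ (g : G) (y : Y), g • y = y → g = 1) (hf : IsLocalHomeomorph f) :
    IsLocalHomeomorph f.orbitQuotientMap :=
  isLocalHomeomorph_of_isLocallyInjective (f.continuous_orbitQuotientMap hf.continuous)
    (f.isOpenMap_orbitQuotientMap hf.isOpenMap)
    (f.isLocallyInjective_orbitQuotientMap hfree hf.continuous hf.isLocallyInjective)

end MulActionHom

end

theorem stmt4_general {G E0 E1 : Type*} [Group G] [TopologicalSpace G]
    [TopologicalSpace E0] [TopologicalSpace E1]
    [LocallyCompactSpace E0] [LocallyCompactSpace E1]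
    [MulAction G E0] [MulAction G E1]
    (hfree0 : ∀ (g : G) (v : E0), g • v = v → g = 1)
    (hprop0 : IsProperMap fun gp : G × E0 => (gp.1 • gp.2, gp.2))
    (hprop1 : IsProperMap fun gp : G × E1 => (gp.1 • gp.2, gp.2))
    (s r : E1 → E0) (hs : IsLocalHomeomorph s) (hr : Continuous r)
    (hseq : ∀ (g : G) (e : E1), s (g • e) = g • s e)
    (hreq : ∀ (g : G) (e : E1), r (g • e) = g • r e) :
    T2Space (Quotient (MulAction.orbitRel G E0)) ∧
    LocallyCompactSpace (Quotient (MulAction.orbitRel G E0)) ∧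
    T2Space (Quotient (MulAction.orbitRel G E1)) ∧
    LocallyCompactSpace (Quotient (MulAction.orbitRel G E1)) ∧
    (∃ sbar : Quotient (MulAction.orbitRel G E1) → Quotient (MulAction.orbitRel G E0),
      (∀ e : E1, sbar (Quotient.mk (MulAction.orbitRel G E1) e)
          = Quotient.mk (MulAction.orbitRel G E0) (s e)) ∧
      IsLocalHomeomorph sbar) ∧
    (∃ rbar : Quotient (MulAction.orbitRel G E1) → Quotient (MulAction.orbitRel G E0),
      (∀ e : E1, rbar (Quotient.mk (MulAction.orbitRel G E1) e)
          = Quotient.mk (MulAction.orbitRel G E0) (r e)) ∧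
      Continuous rbar) := by
  have : ProperSMul G E0 := ⟨hprop0⟩
  have : ProperSMul G E1 := ⟨hprop1⟩
  let sG : E1 →[G] E0 := ⟨s, hseq⟩
  let rG : E1 →[G] E0 := ⟨r, hreq⟩
  exact ⟨inferInstance, isOpenQuotientMap_quotientMk.locallyCompactSpace,
    inferInstance, isOpenQuotientMap_quotientMk.locallyCompactSpace,
    ⟨sG.orbitQuotientMap, sG.orbitQuotientMap_mk,
      sG.isLocalHomeomorph_orbitQuotientMap hfree0 hs⟩,
    ⟨rG.orbitQuotientMap, rG.orbitQuotientMap_mk, rG.continuous_orbitQuotientMap hr⟩⟩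

/-- If a locally compact group `G` acts freely and properly on a topological
graph `E = (E⁰, E¹, s, r)`, then the quotient `(E⁰/G, E¹/G, s̄, r̄)` is again a topological
graph: the orbit spaces are locally compact Hausdorff, the induced range map `r̄` is
continuous, and the induced source map `s̄` is a local homeomorphism. -/
theorem stmt4 {G E0 E1 : Type*} [Group G] [TopologicalSpace G]
    [T2Space G] [LocallyCompactSpace G] [IsTopologicalGroup G]
    [TopologicalSpace E0] [TopologicalSpace E1]
    [T2Space E0] [T2Space E1] [LocallyCompactSpace E0] [LocallyCompactSpace E1]
    [MulAction G E0] [MulAction G E1]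
    (hc0 : Continuous fun p : G × E0 => p.1 • p.2)
    (hc1 : Continuous fun p : G × E1 => p.1 • p.2)
    (hfree0 : ∀ (g : G) (v : E0), g • v = v → g = 1)
    (hfree1 : ∀ (g : G) (e : E1), g • e = e → g = 1)
    (hprop0 : IsProperMap fun gp : G × E0 => (gp.1 • gp.2, gp.2))
    (hprop1 : IsProperMap fun gp : G × E1 => (gp.1 • gp.2, gp.2))
    (s r : E1 → E0) (hs : IsLocalHomeomorph s) (hr : Continuous r)
    (hseq : ∀ (g : G) (e : E1), s (g • e) = g • s e)
    (hreq : ∀ (g : G) (e : E1), r (g • e) = g • r e) :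
    T2Space (Quotient (MulAction.orbitRel G E0)) ∧
    LocallyCompactSpace (Quotient (MulAction.orbitRel G E0)) ∧
    T2Space (Quotient (MulAction.orbitRel G E1)) ∧
    LocallyCompactSpace (Quotient (MulAction.orbitRel G E1)) ∧
    (∃ sbar : Quotient (MulAction.orbitRel G E1) → Quotient (MulAction.orbitRel G E0),
      (∀ e : E1, sbar (Quotient.mk (MulAction.orbitRel G E1) e)
          = Quotient.mk (MulAction.orbitRel G E0) (s e)) ∧
      IsLocalHomeomorph sbar) ∧
    (∃ rbar : Quotient (MulAction.orbitRel G E1) → Quotient (MulAction.orbitRel G E0),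
      (∀ e : E1, rbar (Quotient.mk (MulAction.orbitRel G E1) e)
          = Quotient.mk (MulAction.orbitRel G E0) (r e)) ∧
      Continuous rbar) :=
  stmt4_general hfree0 hprop0 hprop1 s r hs hr hseq hreq
end

section
/- Let a locally compact group $G$ act freely and properly on a topological graph $E = (E^0, E^1, s, r)$, let $q_1 : E^1 \to E^1/G$ be the quotient map, and let $K \subseteq E^1/G$ be compact. Then for every compact $L \subseteq E^0$, both $q_1^{-1}(K) \cap r^{-1}(L)$ and $q_1^{-1}(K) \cap s^{-1}(L)$ are compact subsets of $E^1$. -/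
open Set MulAction
open scoped Pointwise

theorem IsOpenMap.exists_isCompact_image_superset {X Y : Type*} [TopologicalSpace X]
    [TopologicalSpace Y] [WeaklyLocallyCompactSpace X] {q : X → Y} (hqo : IsOpenMap q)
    (hqs : Function.Surjective q) {K : Set Y} (hK : IsCompact K) :
    ∃ C : Set X, IsCompact C ∧ K ⊆ q '' C := by
  choose N hNc hNn using fun x : X => exists_compact_mem_nhds x
  choose lift hlift using hqs
  obtain ⟨t, -, hKt⟩ := hK.elim_nhds_subcover (fun y => q '' N (lift y)) fun y _ => by
    simpa only [hlift] using hqo.image_mem_nhds (hNn (lift y))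
  refine ⟨⋃ y ∈ t, N (lift y), t.isCompact_biUnion fun y _ => hNc _, ?_⟩
  rwa [image_iUnion₂]

theorem MulAction.exists_isCompact_image_quotientMk_superset {G X : Type*} [Group G]
    [TopologicalSpace X] [MulAction G X] [ContinuousConstSMul G X] [WeaklyLocallyCompactSpace X]
    {K : Set (Quotient (orbitRel G X))} (hK : IsCompact K) :
    ∃ C : Set X, IsCompact C ∧ K ⊆ Quotient.mk (orbitRel G X) '' C :=
  isOpenQuotientMap_quotientMk.isOpenMap.exists_isCompact_image_superset
    Quotient.mk_surjective hK

/-- Lifting `K` to a compact `C ⊆ X`, every point of the set is `g • c` with `c ∈ C` and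
`g • f c ∈ L`; by properness of the action on `Y` such `g` range over a compact subset of `G`. -/
theorem ProperSMul.isCompact_quotientMk_preimage_inter_preimage {G X Y : Type*} [Group G]
    [TopologicalSpace G] [TopologicalSpace X] [TopologicalSpace Y] [MulAction G X]
    [MulAction G Y] [ProperSMul G X] [ProperSMul G Y] [WeaklyLocallyCompactSpace X] [T2Space Y]
    {f : X → Y} (hf : Continuous f)
    (hf_smul : ∀ (g : G) (x : X), f (g • x) = g • f x) {K : Set (Quotient (orbitRel G X))}
    (hK : IsCompact K) {L : Set Y} (hL : IsCompact L) :
    IsCompact (Quotient.mk (orbitRel G X) ⁻¹' K ∩ f ⁻¹' L) := by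
  obtain ⟨C, hC, hKC⟩ := exists_isCompact_image_quotientMk_superset hK
  have hT : IsCompact {g : G | (g • (f '' C) ∩ L).Nonempty} :=
    ProperSMul.isCompact_setOfPred_inter_nonempty (hC.image hf) hL
  have hclosed : IsClosed (Quotient.mk (orbitRel G X) ⁻¹' K ∩ f ⁻¹' L) :=
    (hK.isClosed.preimage continuous_quotient_mk').inter (hL.isClosed.preimage hf)
  refine (hT.smul_set hC).of_isClosed_subset hclosed ?_
  rintro x ⟨hxK, hxL⟩
  obtain ⟨c, hcC, hcx⟩ := hKC hxK
  obtain ⟨g, rfl⟩ : ∃ g : G, g • c = x := Quotient.exact hcx.symm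
  refine smul_mem_smul ⟨g • f c, smul_mem_smul_set (mem_image_of_mem f hcC), ?_⟩ hcC
  rwa [← hf_smul]

theorem stmt5_general {G E0 E1 : Type*} [Group G] [TopologicalSpace G]
    [TopologicalSpace E0] [TopologicalSpace E1]
    [T2Space E0] [LocallyCompactSpace E1]
    [MulAction G E0] [MulAction G E1]
    (hprop0 : IsProperMap fun gp : G × E0 => (gp.1 • gp.2, gp.2))
    (hprop1 : IsProperMap fun gp : G × E1 => (gp.1 • gp.2, gp.2))
    (s r : E1 → E0) (hs : IsLocalHomeomorph s) (hr : Continuous r)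
    (hseq : ∀ (g : G) (e : E1), s (g • e) = g • s e)
    (hreq : ∀ (g : G) (e : E1), r (g • e) = g • r e)
    (K : Set (Quotient (MulAction.orbitRel G E1))) (hK : IsCompact K)
    (L : Set E0) (hL : IsCompact L) :
    IsCompact ((Quotient.mk (MulAction.orbitRel G E1) ⁻¹' K) ∩ r ⁻¹' L) ∧
    IsCompact ((Quotient.mk (MulAction.orbitRel G E1) ⁻¹' K) ∩ s ⁻¹' L) := by
  have : ProperSMul G E0 := ⟨hprop0⟩
  have : ProperSMul G E1 := ⟨hprop1⟩
  exact ⟨ProperSMul.isCompact_quotientMk_preimage_inter_preimage hr hreq hK hL,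
    ProperSMul.isCompact_quotientMk_preimage_inter_preimage hs.continuous hseq hK hL⟩

/-- If a locally compact group `G` acts freely and properly on a topological
graph `E = (E⁰, E¹, s, r)`, `q₁ : E¹ → E¹/G` is the quotient map and `K ⊆ E¹/G` is compact,
then for every compact `L ⊆ E⁰` both `q₁⁻¹(K) ∩ r⁻¹(L)` and `q₁⁻¹(K) ∩ s⁻¹(L)` are compact. -/
theorem stmt5 {G E0 E1 : Type*} [Group G] [TopologicalSpace G]
    [T2Space G] [LocallyCompactSpace G] [IsTopologicalGroup G]
    [TopologicalSpace E0] [TopologicalSpace E1]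
    [T2Space E0] [T2Space E1] [LocallyCompactSpace E0] [LocallyCompactSpace E1]
    [MulAction G E0] [MulAction G E1]
    (hc0 : Continuous fun p : G × E0 => p.1 • p.2)
    (hc1 : Continuous fun p : G × E1 => p.1 • p.2)
    (hfree0 : ∀ (g : G) (v : E0), g • v = v → g = 1)
    (hfree1 : ∀ (g : G) (e : E1), g • e = e → g = 1)
    (hprop0 : IsProperMap fun gp : G × E0 => (gp.1 • gp.2, gp.2))
    (hprop1 : IsProperMap fun gp : G × E1 => (gp.1 • gp.2, gp.2))
    (s r : E1 → E0) (hs : IsLocalHomeomorph s) (hr : Continuous r)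
    (hseq : ∀ (g : G) (e : E1), s (g • e) = g • s e)
    (hreq : ∀ (g : G) (e : E1), r (g • e) = g • r e)
    (K : Set (Quotient (MulAction.orbitRel G E1))) (hK : IsCompact K)
    (L : Set E0) (hL : IsCompact L) :
    IsCompact ((Quotient.mk (MulAction.orbitRel G E1) ⁻¹' K) ∩ r ⁻¹' L) ∧
    IsCompact ((Quotient.mk (MulAction.orbitRel G E1) ⁻¹' K) ∩ s ⁻¹' L) :=
  stmt5_general hprop0 hprop1 s r hs hr hseq hreq K hK L hL
end

section
/- Let $E$ be a topological graph in which both $r, s : E^1 \to E^0$ are finite-to-one covering maps and $E^0$ is locally contractible. Then the geometric realization $R(E)$ is locally contractible. -/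
/-! Away from the vertices, `R(E)` is locally `E¹ × (0, 1)`, which is locally contractible
because `s` is a local homeomorphism onto `E⁰`. Near a vertex `v`, finiteness of the fibres of the
covering maps `s` and `r` over `v` gives, inside any neighbourhood, a whole star: a neighbourhood
`D` of `v` together with the end segments of uniform length `δ` of the edges starting or ending
in `D`. Taking `D` contractible, squeezing every edge towards its endpoints deforms the star onto
`D`, so the star is contractible. -/

/-- A space is locally contractible if every point has a neighborhood base of
contractible neighborhoods. -/
def LocallyContractibleSpace' (X : Type*) [TopologicalSpace X] : Prop :=
  ∀ x : X, ∀ U ∈ nhds x, ∃ V ∈ nhds x, V ⊆ U ∧ ContractibleSpace V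

/-- The gluing relation defining the geometric realization `R(E)` of a topological graph:
`(e,0)` is identified with `s e` and `(e,1)` with `r e`. -/
inductive glueRel {E0 E1 : Type*} (s r : E1 → E0) :
    (E1 × unitInterval) ⊕ E0 → (E1 × unitInterval) ⊕ E0 → Prop
  | src (e : E1) : glueRel s r (Sum.inl (e, 0)) (Sum.inr (s e))
  | rng (e : E1) : glueRel s r (Sum.inl (e, 1)) (Sum.inr (r e))

open Set Filter Topology unitInterval

theorem locallyContractibleSpace'_iff (X : Type*) [TopologicalSpace X] :
    LocallyContractibleSpace' X ↔ StronglyLocallyContractibleSpace X := by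
  refine ⟨fun h => ⟨fun x => hasBasis_self.mpr fun U hU => ?_⟩, fun h x U hU => ?_⟩
  · obtain ⟨V, hV, hVU, hVc⟩ := h x U hU
    exact ⟨V, hV, hVc, hVU⟩
  · obtain ⟨V, hV, hVc, hVU⟩ := hasBasis_self.mp (contractible_basis x) U hU
    exact ⟨V, hV, hVU, hVc⟩

section StronglyLocallyContractible

variable {X Y : Type*} [TopologicalSpace X] [TopologicalSpace Y]

theorem Topology.IsOpenEmbedding.hasBasis_contractible_nhds [StronglyLocallyContractibleSpace X]
    {f : X → Y} (hf : IsOpenEmbedding f) (x : X) :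
    (𝓝 (f x)).HasBasis (fun V : Set Y => V ∈ 𝓝 (f x) ∧ ContractibleSpace V) id := by
  refine hasBasis_self.mpr fun U hU => ?_
  obtain ⟨V, ⟨hV, hVc⟩, hVU⟩ :=
    (contractible_basis x).mem_iff.mp (hf.continuous.continuousAt hU)
  exact ⟨f '' V, hf.isOpenMap.image_mem_nhds hV,
    (hf.isEmbedding.homeomorphImage V).symm.contractibleSpace, image_subset_iff.mpr hVU⟩

theorem IsLocalHomeomorph.stronglyLocallyContractibleSpace [StronglyLocallyContractibleSpace Y]
    {f : X → Y} (hf : IsLocalHomeomorph f) : StronglyLocallyContractibleSpace X where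
  contractible_basis x := by
    obtain ⟨e, hx, rfl⟩ := hf x
    have := e.isOpenEmbedding_restrict.stronglyLocallyContractibleSpace
    exact e.open_source.isOpenEmbedding_subtypeVal.hasBasis_contractible_nhds ⟨x, hx⟩

instance {E : Type*} [NormedAddCommGroup E] [NormedSpace ℝ E] :
    StronglyLocallyContractibleSpace E :=
  .of_bases (fun _ => Metric.nhds_basis_ball) fun _ _ hr => Metric.contractibleSpace_ball hr

end StronglyLocallyContractible

theorem ContractibleSpace.of_deformationRetract {Y : Type*} [TopologicalSpace Y] {S A : Set Y}
    [ContractibleSpace A] (H : I × Y → Y) (hH : Continuous H) (hAS : A ⊆ S)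
    (h_zero : ∀ y ∈ S, H (0, y) = y) (h_mapsTo : ∀ u, ∀ y ∈ S, H (u, y) ∈ S)
    (h_one : ∀ y ∈ S, H (1, y) ∈ A) (h_fix : ∀ a ∈ A, H (1, a) = a) : ContractibleSpace S := by
  let retr : C(S, A) := ⟨fun y => ⟨H (1, y), h_one y y.2⟩, by fun_prop⟩
  let incl : C(A, S) := ⟨fun a => ⟨a, hAS a.2⟩, by fun_prop⟩
  refine ContinuousMap.HomotopyEquiv.contractibleSpace
    { toFun := retr, invFun := incl, left_inv := ?_, right_inv := ?_ }
  · refine ⟨⟨⟨fun p => ⟨H (σ p.1, p.2), h_mapsTo _ _ p.2.2⟩, by fun_prop⟩, ?_, ?_⟩⟩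
    · intro y
      ext
      simp [retr, incl]
    · intro y
      ext
      simp [h_zero y y.2]
  · have : retr.comp incl = ContinuousMap.id A := by
      ext a
      simp [retr, incl, h_fix a a.2]
    rw [this]

namespace Quot

variable {α Y : Type*} {R : α → α → Prop}

theorem preimage_image_mk_of_forall_rel {O : Set α} (hO : ∀ a b, R a b → (a ∈ O ↔ b ∈ O)) :
    Quot.mk R ⁻¹' (Quot.mk R '' O) = O := by
  refine Subset.antisymm ?_ (subset_preimage_image _ _)
  rintro z ⟨y, hy, hyz⟩
  have : (y ∈ O) = (z ∈ O) := congrArg (Quot.lift (· ∈ O) fun a b h => propext (hO a b h)) hyz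
  exact this ▸ hy

variable [TopologicalSpace α] [TopologicalSpace Y]

theorem isOpen_image_mk {O : Set α} (hO : ∀ a b, R a b → (a ∈ O ↔ b ∈ O)) (hOo : IsOpen O) :
    IsOpen (Quot.mk R '' O) := by
  rw [← isQuotientMap_quot_mk.isOpen_preimage, preimage_image_mk_of_forall_rel hO]
  exact hOo

theorem isOpenEmbedding_mk_comp {ι : Y → α} (hι : IsOpenEmbedding ι)
    (hR : ∀ a b, R a b → a ∉ range ι ∧ b ∉ range ι) : IsOpenEmbedding (Quot.mk R ∘ ι) := by
  have respects {O : Set α} (hO : O ⊆ range ι) : ∀ a b, R a b → (a ∈ O ↔ b ∈ O) :=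
    fun a b h => iff_of_false (fun ha => (hR a b h).1 (hO ha)) (fun hb => (hR a b h).2 (hO hb))
  refine .of_continuous_injective_isOpenMap (continuous_quot_mk.comp hι.continuous) ?_ ?_
  · intro y y' h
    have : ι y' ∈ Quot.mk R ⁻¹' (Quot.mk R '' {ι y}) := ⟨ι y, rfl, h⟩
    rw [preimage_image_mk_of_forall_rel (respects (by simp))] at this
    exact hι.injective this.symm
  · intro O hO
    rw [image_comp]
    exact isOpen_image_mk (respects (image_subset_range _ _)) (hι.isOpenMap O hO)

end Quot

theorem IsCoveringMap.comap_nhds_le_nhdsSet_fiber {E X : Type*} [TopologicalSpace E]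
    [TopologicalSpace X] {f : E → X} (hf : IsCoveringMap f) {x : X} (hfin : (f ⁻¹' {x}).Finite) :
    comap f (𝓝 x) ≤ 𝓝ˢ (f ⁻¹' {x}) := by
  intro W hW
  obtain ⟨-, U, hxU, hU, -, H, hH⟩ := hf x
  have := hfin.to_subtype
  have hsheets : ∀ᶠ u in 𝓝 (⟨x, hxU⟩ : U), ∀ i, (H.symm (u, i) : E) ∈ W := by
    refine eventually_all.mpr fun i => ?_
    have hfib : f (H.symm (⟨x, hxU⟩, i)) = x := by
      simpa using (hH (H.symm (⟨x, hxU⟩, i))).symm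
    exact (by fun_prop : Continuous fun u : U => (H.symm (u, i) : E)).continuousAt
      (mem_nhdsSet_iff_forall.mp hW _ hfib)
  rw [nhds_subtype_eq_comap, eventually_comap] at hsheets
  refine mem_comap.mpr ⟨_, hsheets.and (hU.mem_nhds hxU), fun e ⟨he, heU⟩ => ?_⟩
  have := he (H ⟨e, heU⟩).1 (hH _) (H ⟨e, heU⟩).2
  rwa [Prod.mk.eta, Homeomorph.symm_apply_apply] at this

theorem IsCoveringMap.exists_tube_around_fiber {E X T : Type*} [TopologicalSpace E]
    [TopologicalSpace X] [PseudoMetricSpace T] {f : E → X} (hf : IsCoveringMap f) {x : X}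
    (hfin : (f ⁻¹' {x}).Finite) {t₀ : T} {O : Set (E × T)} (hO : IsOpen O)
    (hfibO : (f ⁻¹' {x}) ×ˢ {t₀} ⊆ O) :
    ∃ D ∈ 𝓝 x, ∃ δ > 0, ∀ e t, f e ∈ D → dist t t₀ < δ → (e, t) ∈ O := by
  obtain ⟨W, J, hW, hJ, hfibW, ht₀J, hWJ⟩ :=
    generalized_tube_lemma hfin.isCompact isCompact_singleton hO hfibO
  obtain ⟨D, hD, hDW⟩ :=
    mem_comap.mp (hf.comap_nhds_le_nhdsSet_fiber hfin (hW.mem_nhdsSet.mpr hfibW))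
  obtain ⟨δ, hδ, hδJ⟩ := Metric.isOpen_iff.mp hJ t₀ (ht₀J rfl)
  exact ⟨D, hD, δ, hδ, fun e t he ht => hWJ ⟨hDW he, hδJ ht⟩⟩

namespace unitInterval

/-- At time `1` this collapses `[0, 1/4]` to `0` and `[3/4, 1]` to `1`. -/
noncomputable def squeeze (u t : I) : I :=
  projIcc 0 1 zero_le_one ((1 + u) * t - u / 2)

theorem continuous_squeeze : Continuous fun p : I × I => squeeze p.1 p.2 :=
  continuous_projIcc.comp (by fun_prop)

@[simp] theorem squeeze_zero_left (t : I) : squeeze 0 t = t := by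
  simp [squeeze, projIcc_val]

theorem squeeze_zero_right (u : I) : squeeze u 0 = 0 :=
  projIcc_of_le_left _ (by simp; linarith [u.2.1])

theorem squeeze_one_right (u : I) : squeeze u 1 = 1 :=
  projIcc_of_right_le _ (by simp; linarith [u.2.1])

theorem squeeze_one_left_of_le {t : I} (ht : (t : ℝ) ≤ 1 / 4) : squeeze 1 t = 0 :=
  projIcc_of_le_left _ (by simp; linarith)

theorem squeeze_one_left_of_ge {t : I} (ht : 3 / 4 ≤ (t : ℝ)) : squeeze 1 t = 1 :=
  projIcc_of_right_le _ (by simp; linarith)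

theorem squeeze_lt {δ : ℝ} (hδ : 0 < δ) (u : I) {t : I} (ht : (t : ℝ) < δ)
    (ht' : (t : ℝ) ≤ 1 / 2) : (squeeze u t : ℝ) < δ := by
  rw [squeeze, coe_projIcc]
  refine max_lt hδ (min_lt_of_right_lt ?_)
  nlinarith [u.2.1]

theorem lt_squeeze {δ : ℝ} (hδ : 0 < δ) (u : I) {t : I} (ht : 1 - δ < (t : ℝ))
    (ht' : 1 / 2 ≤ (t : ℝ)) : 1 - δ < (squeeze u t : ℝ) := by
  rw [squeeze, coe_projIcc]
  refine lt_max_of_lt_right (lt_min (by linarith) ?_)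
  nlinarith [u.2.1]

end unitInterval

namespace glueRel

variable {E0 E1 : Type*} {s r : E1 → E0}

variable (s r) in
/-- The star of a set `D` of vertices: `D` together with the end segments of length `δ` of the
edges starting or ending in `D`. -/
def star (D : Set E0) (δ : ℝ) : Set ((E1 × I) ⊕ E0) :=
  Sum.elim (fun p => s p.1 ∈ D ∧ (p.2 : ℝ) < δ ∨ r p.1 ∈ D ∧ 1 - δ < p.2) (· ∈ D)

@[simp] theorem mem_star_inl {D : Set E0} {δ : ℝ} {p : E1 × I} :
    Sum.inl p ∈ star s r D δ ↔ s p.1 ∈ D ∧ (p.2 : ℝ) < δ ∨ r p.1 ∈ D ∧ 1 - δ < p.2 := Iff.rfl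

@[simp] theorem mem_star_inr {D : Set E0} {δ : ℝ} {v : E0} :
    Sum.inr v ∈ star s r D δ ↔ v ∈ D := Iff.rfl

theorem star_mono {D D' : Set E0} {δ δ' : ℝ} (hD : D ⊆ D') (hδ : δ ≤ δ') :
    star s r D δ ⊆ star s r D' δ' := by
  rintro (⟨e, t⟩ | v) hz
  · exact hz.imp (fun h => ⟨hD h.1, h.2.trans_le hδ⟩) fun h => ⟨hD h.1, by linarith [h.2]⟩
  · exact hD hz

theorem mem_star_iff_of_rel {D : Set E0} {δ : ℝ} (hδ : 0 < δ) (hδ' : δ ≤ 1) :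
    ∀ a b, glueRel s r a b → (a ∈ star s r D δ ↔ b ∈ star s r D δ) := by
  rintro _ _ (e | e) <;> simp [hδ, hδ']

noncomputable def squeezeEdges (u : I) : (E1 × I) ⊕ E0 → (E1 × I) ⊕ E0 :=
  Sum.map (fun p => (p.1, squeeze u p.2)) id

theorem squeezeEdges_zero (z : (E1 × I) ⊕ E0) : squeezeEdges 0 z = z := by
  rcases z with ⟨e, t⟩ | v <;> simp [squeezeEdges]

theorem squeezeEdges_rel (u : I) ⦃a b⦄ (h : glueRel s r a b) :
    glueRel s r (squeezeEdges u a) (squeezeEdges u b) := by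
  cases h with
  | src e => simpa [squeezeEdges, squeeze_zero_right] using glueRel.src (s := s) (r := r) e
  | rng e => simpa [squeezeEdges, squeeze_one_right] using glueRel.rng (s := s) (r := r) e

theorem squeezeEdges_mem_star {D : Set E0} {δ : ℝ} (hδ : 0 < δ) (hδ' : δ ≤ 1 / 2) (u : I)
    {z} (hz : z ∈ star s r D δ) : squeezeEdges u z ∈ star s r D δ := by
  rcases z with ⟨e, t⟩ | v
  · rcases hz with ⟨he, ht⟩ | ⟨he, ht⟩
    · exact Or.inl ⟨he, squeeze_lt hδ u ht (by linarith)⟩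
    · exact Or.inr ⟨he, lt_squeeze hδ u ht (by linarith)⟩
  · exact hz

theorem mk_squeezeEdges_one_mem {D : Set E0} {δ : ℝ} (hδ : δ ≤ 1 / 4) {z}
    (hz : z ∈ star s r D δ) :
    Quot.mk (glueRel s r) (squeezeEdges 1 z) ∈ (Quot.mk _ ∘ Sum.inr) '' D := by
  rcases z with ⟨e, t⟩ | v
  · rcases hz with ⟨he, ht⟩ | ⟨he, ht⟩
    · refine ⟨s e, he, (Quot.sound (glueRel.src e)).symm.trans ?_⟩
      simp [squeezeEdges, squeeze_one_left_of_le (by linarith : (t : ℝ) ≤ 1 / 4)]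
    · refine ⟨r e, he, (Quot.sound (glueRel.rng e)).symm.trans ?_⟩
      simp [squeezeEdges, squeeze_one_left_of_ge (by linarith : 3 / 4 ≤ (t : ℝ))]
  · exact ⟨v, hz, rfl⟩

variable [TopologicalSpace E0] [TopologicalSpace E1]

theorem isOpen_star (hs : Continuous s) (hr : Continuous r) {D : Set E0} (hD : IsOpen D)
    (δ : ℝ) : IsOpen (star s r D δ) := by
  refine isOpen_sum_iff.mpr ⟨?_, hD⟩
  have ht : Continuous fun p : E1 × I => (p.2 : ℝ) := continuous_subtype_val.comp continuous_snd
  exact ((hD.preimage (hs.comp continuous_fst)).inter (isOpen_lt ht continuous_const)).union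
    ((hD.preimage (hr.comp continuous_fst)).inter (isOpen_lt continuous_const ht))

theorem continuous_squeezeEdges :
    Continuous fun p : I × ((E1 × I) ⊕ E0) => squeezeEdges p.1 p.2 := by
  have : (fun p : I × ((E1 × I) ⊕ E0) => squeezeEdges p.1 p.2) =
      Sum.elim (fun q => Sum.inl (q.2.1, squeeze q.1 q.2.2)) (fun q => Sum.inr q.2) ∘
        Homeomorph.prodSumDistrib := by
    funext p
    rcases p with ⟨u, p | v⟩ <;> rfl
  rw [this]
  have hedge : Continuous fun q : I × (E1 × I) => (q.2.1, squeeze q.1 q.2.2) :=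
    continuous_snd.fst.prodMk (continuous_squeeze.comp (continuous_fst.prodMk continuous_snd.snd))
  exact ((continuous_inl.comp hedge).sumElim (by fun_prop)).comp (Homeomorph.continuous _)

variable (s r) in
noncomputable def deform (p : I × Quot (glueRel s r)) : Quot (glueRel s r) :=
  Quot.map (squeezeEdges p.1) (squeezeEdges_rel p.1) p.2

theorem continuous_deform : Continuous (deform s r) :=
  isQuotientMap_quot_mk.continuous_lift_prod_right <|
    continuous_quot_mk.comp continuous_squeezeEdges

theorem isEmbedding_vertex (hs : Continuous s) (hr : Continuous r) :
    IsEmbedding (Quot.mk (glueRel s r) ∘ Sum.inr) := by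
  have preimage_star (D : Set E0) :
      (Quot.mk (glueRel s r) ∘ Sum.inr) ⁻¹' (Quot.mk _ '' star s r D (1 / 2)) = D := by
    rw [preimage_comp, Quot.preimage_image_mk_of_forall_rel
      (mem_star_iff_of_rel (by norm_num) (by norm_num))]
    rfl
  refine ⟨⟨TopologicalSpace.ext_iff.mpr fun D => ?_⟩, fun a b hab => ?_⟩
  · rw [isOpen_induced_iff]
    refine ⟨fun hD => ⟨_, Quot.isOpen_image_mk (mem_star_iff_of_rel (by norm_num) (by norm_num))
      (isOpen_star hs hr hD _), preimage_star D⟩, ?_⟩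
    rintro ⟨O, hO, rfl⟩
    exact hO.preimage (continuous_quot_mk.comp continuous_inr)
  · have : b ∈ (Quot.mk (glueRel s r) ∘ Sum.inr) ⁻¹' (Quot.mk _ '' star s r {a} (1 / 2)) :=
      ⟨Sum.inr a, rfl, hab⟩
    rw [preimage_star] at this
    exact this.symm

theorem isOpenEmbedding_edge :
    IsOpenEmbedding (Quot.mk (glueRel s r) ∘ Sum.inl ∘
      Prod.map id (inclusion (Ioo_subset_Icc_self : Ioo (0 : ℝ) 1 ⊆ I))) := by
  have hIoo : IsOpenEmbedding (inclusion (Ioo_subset_Icc_self : Ioo (0 : ℝ) 1 ⊆ I)) :=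
    ⟨.inclusion _, by rw [range_inclusion]; exact isOpen_Ioo.preimage continuous_subtype_val⟩
  refine Quot.isOpenEmbedding_mk_comp
    (IsOpenEmbedding.inl.comp (IsOpenEmbedding.id.prodMap hIoo)) ?_
  rintro _ _ (e | e) <;> refine ⟨?_, by simp⟩ <;> rintro ⟨⟨e', t⟩, h⟩ <;>
    simp only [Function.comp_apply, Prod.map, Sum.inl.injEq, Prod.mk.injEq] at h
  · exact (t.2.1).ne' (congrArg Subtype.val h.2)
  · exact (t.2.2).ne (congrArg Subtype.val h.2)

theorem exists_star_subset (hs : IsCoveringMap s) (hr : IsCoveringMap r)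
    (hsf : ∀ v : E0, (s ⁻¹' {v}).Finite) (hrf : ∀ v : E0, (r ⁻¹' {v}).Finite)
    {O : Set ((E1 × I) ⊕ E0)} (hO : IsOpen O)
    (hOrel : ∀ a b, glueRel s r a b → (a ∈ O ↔ b ∈ O)) {v : E0} (hv : Sum.inr v ∈ O) :
    ∃ D ∈ 𝓝 v, ∃ δ > 0, star s r D δ ⊆ O := by
  have hOedge : IsOpen (Sum.inl ⁻¹' O) := hO.preimage continuous_inl
  obtain ⟨Ds, hDs, δs, hδs, hsO⟩ := hs.exists_tube_around_fiber (hsf v) (t₀ := 0) hOedge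
    (by rintro ⟨e, t⟩ ⟨rfl, rfl⟩; exact (hOrel _ _ (.src e)).mpr hv)
  obtain ⟨Dr, hDr, δr, hδr, hrO⟩ := hr.exists_tube_around_fiber (hrf v) (t₀ := 1) hOedge
    (by rintro ⟨e, t⟩ ⟨rfl, rfl⟩; exact (hOrel _ _ (.rng e)).mpr hv)
  refine ⟨Ds ∩ Dr ∩ Sum.inr ⁻¹' O, inter_mem (inter_mem hDs hDr)
    ((hO.preimage continuous_inr).mem_nhds hv), min δs δr, lt_min hδs hδr, ?_⟩
  rintro (⟨e, t⟩ | w) hz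
  · rcases hz with ⟨he, ht⟩ | ⟨he, ht⟩
    · refine hsO e t he.1.1 ?_
      rw [Subtype.dist_eq, Real.dist_eq, Icc.coe_zero, sub_zero, abs_of_nonneg t.2.1]
      exact ht.trans_le (min_le_left _ _)
    · refine hrO e t he.1.2 ?_
      rw [Subtype.dist_eq, Real.dist_eq, Icc.coe_one, abs_sub_comm,
        abs_of_nonneg (by linarith [t.2.2])]
      linarith [min_le_right δs δr]
  · exact hz.2

/-- `ε ≤ 1 / 4` makes `squeeze 1` collapse the star onto its vertex set `C`. -/
theorem contractibleSpace_image_star (hs : Continuous s) (hr : Continuous r) {C : Set E0}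
    [ContractibleSpace C] {ε : ℝ} (hε : 0 < ε) (hε' : ε ≤ 1 / 4) :
    ContractibleSpace (Quot.mk (glueRel s r) '' star s r C ε) := by
  have := ((isEmbedding_vertex hs hr).homeomorphImage C).symm.contractibleSpace
  refine .of_deformationRetract (deform s r) continuous_deform (A := (Quot.mk _ ∘ Sum.inr) '' C)
    ?_ ?_ ?_ ?_ ?_
  · rintro _ ⟨c, hc, rfl⟩
    exact ⟨Sum.inr c, hc, rfl⟩
  · rintro _ ⟨z, -, rfl⟩
    exact congrArg _ (squeezeEdges_zero z)
  · rintro u _ ⟨z, hz, rfl⟩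
    exact ⟨_, squeezeEdges_mem_star hε (by linarith) u hz, rfl⟩
  · rintro _ ⟨z, hz, rfl⟩
    exact mk_squeezeEdges_one_mem hε' hz
  · rintro _ ⟨c, -, rfl⟩
    rfl

theorem hasBasis_contractible_nhds_vertex [StronglyLocallyContractibleSpace E0]
    (hs : IsCoveringMap s) (hr : IsCoveringMap r)
    (hsf : ∀ v : E0, (s ⁻¹' {v}).Finite) (hrf : ∀ v : E0, (r ⁻¹' {v}).Finite) (v : E0) :
    (𝓝 (Quot.mk (glueRel s r) (Sum.inr v))).HasBasis
      (fun V => V ∈ 𝓝 (Quot.mk (glueRel s r) (Sum.inr v)) ∧ ContractibleSpace V) id := by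
  refine hasBasis_self.mpr fun U hU => ?_
  obtain ⟨U', hU'U, hU'o, hvU'⟩ := mem_nhds_iff.mp hU
  have hrel a b (h : glueRel s r a b) : a ∈ Quot.mk _ ⁻¹' U' ↔ b ∈ Quot.mk _ ⁻¹' U' := by
    rw [mem_preimage, mem_preimage, Quot.sound h]
  obtain ⟨D, hD, δ, hδ, hDU'⟩ :=
    exists_star_subset hs hr hsf hrf (hU'o.preimage continuous_quot_mk) hrel hvU'
  obtain ⟨C, ⟨hC, hCc⟩, hCD⟩ := (contractible_basis v).mem_iff.mp hD
  set ε := min δ (1 / 4)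
  have hε : 0 < ε := lt_min hδ (by norm_num)
  have hε' : ε ≤ 1 / 4 := min_le_right _ _
  refine ⟨Quot.mk _ '' star s r C ε, ?_, ?_, ?_⟩
  · have hopen := Quot.isOpen_image_mk (mem_star_iff_of_rel hε (by linarith))
      (isOpen_star hs.continuous hr.continuous (isOpen_interior (s := C)) ε)
    refine mem_of_superset (hopen.mem_nhds ⟨Sum.inr v, mem_interior_iff_mem_nhds.mpr hC, rfl⟩) ?_
    exact image_mono (star_mono interior_subset le_rfl)
  · exact contractibleSpace_image_star hs.continuous hr.continuous hε hε'
  · exact (image_subset_iff.mpr ((star_mono hCD (min_le_left _ _)).trans hDU')).trans hU'U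

end glueRel

open glueRel in
theorem stmt9_general {E0 E1 : Type*} [TopologicalSpace E0] [TopologicalSpace E1]
    (s r : E1 → E0)
    (hs : IsCoveringMap s) (hr : IsCoveringMap r)
    (hsf : ∀ v : E0, (s ⁻¹' {v}).Finite) (hrf : ∀ v : E0, (r ⁻¹' {v}).Finite)
    (hE0 : LocallyContractibleSpace' E0) :
    LocallyContractibleSpace' (Quot (glueRel s r)) := by
  rw [locallyContractibleSpace'_iff] at hE0 ⊢
  have := hs.isLocalHomeomorph.stronglyLocallyContractibleSpace
  have := (isOpen_Ioo (a := (0 : ℝ)) (b := 1)).stronglyLocallyContractibleSpace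
  refine ⟨Quot.ind fun z => ?_⟩
  rcases z with ⟨e, t⟩ | v
  · obtain h0 | h0 := t.2.1.eq_or_lt
    · rw [show t = 0 from Subtype.ext h0.symm, Quot.sound (glueRel.src e)]
      exact hasBasis_contractible_nhds_vertex hs hr hsf hrf _
    obtain h1 | h1 := t.2.2.eq_or_lt
    · rw [show t = 1 from Subtype.ext h1, Quot.sound (glueRel.rng e)]
      exact hasBasis_contractible_nhds_vertex hs hr hsf hrf _
    exact isOpenEmbedding_edge.hasBasis_contractible_nhds (e, ⟨t, h0, h1⟩)
  · exact hasBasis_contractible_nhds_vertex hs hr hsf hrf v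

/-- If `E` is a topological graph in which both `r, s : E¹ → E⁰` are
finite-to-one covering maps and `E⁰` is locally contractible, then the geometric
realization `R(E)` (the double mapping torus obtained from `E¹ × [0,1] ⊔ E⁰` by
identifying `(e,0) ∼ s e` and `(e,1) ∼ r e`) is locally contractible. -/
theorem stmt9 {E0 E1 : Type*} [TopologicalSpace E0] [TopologicalSpace E1]
    [T2Space E0] [T2Space E1] [LocallyCompactSpace E0] [LocallyCompactSpace E1]
    (s r : E1 → E0)
    (hs : IsCoveringMap s) (hr : IsCoveringMap r)
    (hsf : ∀ v : E0, (s ⁻¹' {v}).Finite) (hrf : ∀ v : E0, (r ⁻¹' {v}).Finite)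
    (hE0 : LocallyContractibleSpace' E0) :
    LocallyContractibleSpace' (Quot (glueRel s r)) :=
  stmt9_general s r hs hr hsf hrf hE0
end

section
/- Let $E$ be a connected topological graph whose geometric realization $R(E)$ is locally path-connected and semi-locally simply connected, and let $\pi : \tilde R \to R(E)$ be the universal covering. Set $\tilde E^0 = \pi^{-1}(E^0)$ and $\tilde E^1 = \pi^{-1}(E^1 \times \{1/2\})$. Then, defining $s(\tilde e)$ (resp. $r(\tilde e)$) as the endpoint of the lift starting at $\tilde e$ of the path $t \mapsto (e, \tfrac{1}{2}(1-t))$ (resp. $t \mapsto (e, \tfrac{1}{2}(1+t))$) in $R(E)$, where $\pi(\tilde e) = (e, 1/2)$, one obtains well-defined continuous maps $s, r : \tilde E^1 \to \tilde E^0$, and $(\tilde E^0, \tilde E^1, s, r)$ is a topological graph covering $E$. -/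
/-!
Over the subspaces `E⁰` and `E¹ × {1/2}` of `R(E)` the covering `π` restricts to coverings
`Ẽ⁰ → E⁰` and `Ẽ¹ → E¹`; these subspaces are embedded because every open set of `E⁰` or `E¹` is
cut out by an open subset of `E¹ × [0,1] ⊔ E⁰` that is a union of gluing classes. The half-edges
from the midpoints to the two ends, parametrised by `Ẽ¹`, form a homotopy in `R(E)`; lifting it
through `π` gives `s̃` and `r̃` at once as continuous maps, lying over `s` and `r` because
`(e,0) ∼ s e` and `(e,1) ∼ r e`.
-/

open Topology Set unitInterval

section Quot

variable {α : Type*} {rel : α → α → Prop}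

theorem Quot.preimage_image_mk_eq {V : Set α} (hV : ∀ a b, rel a b → (a ∈ V ↔ b ∈ V)) :
    Quot.mk rel ⁻¹' (Quot.mk rel '' V) = V := by
  refine Subset.antisymm ?_ (subset_preimage_image _ _)
  rintro a ⟨b, hb, hba⟩
  have hgen : ∀ x y, Relation.EqvGen rel x y → (x ∈ V ↔ y ∈ V) := by
    intro x y h
    induction h with
    | rel x y h => exact hV x y h
    | refl => rfl
    | symm _ _ _ ih => exact ih.symm
    | trans _ _ _ _ _ ih₁ ih₂ => exact ih₁.trans ih₂
  exact (hgen b a (Quot.eqvGen_exact hba)).mp hb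

variable [TopologicalSpace α] {A : Type*} [TopologicalSpace A]

theorem isInducing_quot_mk_comp {i : A → α} (hi : Continuous i)
    (hsat : ∀ U : Set A, IsOpen U →
      ∃ V : Set α, IsOpen V ∧ (∀ a b, rel a b → (a ∈ V ↔ b ∈ V)) ∧ i ⁻¹' V = U) :
    IsInducing (Quot.mk rel ∘ i) := by
  refine ⟨le_antisymm (continuous_iff_le_induced.mp (continuous_quot_mk.comp hi)) fun U hU => ?_⟩
  obtain ⟨V, hVo, hVsat, rfl⟩ := hsat U hU
  refine isOpen_induced_iff.mpr ⟨Quot.mk rel '' V, ?_, ?_⟩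
  · rw [← isQuotientMap_quot_mk.isOpen_preimage, Quot.preimage_image_mk_eq hVsat]
    exact hVo
  · rw [preimage_comp, Quot.preimage_image_mk_eq hVsat]

end Quot

theorem IsCoveringMap.exists_pullback_of_isEmbedding {R X B : Type*} [TopologicalSpace R]
    [TopologicalSpace X] [TopologicalSpace B] {π : R → X} (hπ : IsCoveringMap π) {g : B → X}
    (hg : IsEmbedding g) :
    ∃ q : {p : R // ∃ b, π p = g b} → B, (∀ p, π p.1 = g (q p)) ∧ IsCoveringMap q := by
  let e : {p : R // ∃ b, π p = g b} ≃ₜ π ⁻¹' range g :=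
    Homeomorph.setCongr (by ext p; exact exists_congr fun _ => eq_comm)
  refine ⟨hg.toHomeomorph.symm ∘ (range g).restrictPreimage π ∘ e, fun p => ?_,
    ((hπ.restrictPreimage _).comp_homeomorph e).homeomorph_comp _⟩
  exact (congrArg Subtype.val
    (hg.toHomeomorph.apply_symm_apply ((range g).restrictPreimage π (e p)))).symm

section GeometricRealization

variable {E0 E1 : Type*} [TopologicalSpace E0] [TopologicalSpace E1] (s r : E1 → E0)

theorem isEmbedding_glue_vertex [T0Space E0] (hs : Continuous s) (hr : Continuous r) :
    IsEmbedding (fun v : E0 => Quot.mk (glueRel s r) (Sum.inr v)) := by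
  refine IsInducing.isEmbedding (isInducing_quot_mk_comp continuous_inr fun U hU => ?_)
  refine ⟨Sum.inl '' ((s ⁻¹' U) ×ˢ {1}ᶜ ∪ (r ⁻¹' U) ×ˢ {0}ᶜ) ∪ Sum.inr '' U, ?_, ?_, ?_⟩
  · exact (isOpenMap_inl _ (((hU.preimage hs).prod isOpen_compl_singleton).union
      ((hU.preimage hr).prod isOpen_compl_singleton))).union (isOpenMap_inr _ hU)
  · rintro _ _ (e | e) <;> simp
  · ext; simp

theorem isEmbedding_glue_midpoint [T0Space E1] :
    IsEmbedding (fun e : E1 => Quot.mk (glueRel s r) (Sum.inl (e, ⟨1/2, by norm_num⟩))) := by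
  refine IsInducing.isEmbedding
    (isInducing_quot_mk_comp (continuous_inl.comp (.prodMk_left _)) fun U hU => ?_)
  refine ⟨Sum.inl '' (U ×ˢ Ioo 0 1), isOpenMap_inl _ (hU.prod isOpen_Ioo), ?_, ?_⟩
  · rintro _ _ (e | e) <;> simp
  · have hhalf : (⟨1/2, by norm_num⟩ : I) ∈ Ioo 0 1 :=
      ⟨show (0 : ℝ) < 1/2 by norm_num, show (1/2 : ℝ) < 1 by norm_num⟩
    ext e
    simp only [mem_preimage, mem_image, Sum.inl.injEq, Prod.exists, mem_prod, Prod.mk.injEq]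
    exact ⟨fun ⟨_, _, ⟨he, _⟩, he', _⟩ => he' ▸ he, fun he => ⟨e, _, ⟨he, hhalf⟩, rfl, rfl⟩⟩

variable {s r} {Rt : Type*} [TopologicalSpace Rt] {π : Rt → Quot (glueRel s r)}

theorem IsCoveringMap.exists_lift_edgePath (hπ : IsCoveringMap π) {A : Type*}
    [TopologicalSpace A] {p : A → E1} (hp : Continuous p) {φ : I → I} (hφ : Continuous φ)
    {a₀ : A → Rt} (ha₀ : Continuous a₀)
    (h₀ : ∀ a, π (a₀ a) = Quot.mk _ (Sum.inl (p a, φ 0))) :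
    ∃ L : C(I × A, Rt),
      (∀ t a, π (L (t, a)) = Quot.mk _ (Sum.inl (p a, φ t))) ∧ ∀ a, L (0, a) = a₀ a :=
  let H : C(I × A, Quot (glueRel s r)) := ⟨fun x => Quot.mk _ (Sum.inl (p x.2, φ x.1)),
    continuous_quot_mk.comp (continuous_inl.comp
      ((hp.comp continuous_snd).prodMk (hφ.comp continuous_fst)))⟩
  ⟨hπ.liftHomotopy H ⟨a₀, ha₀⟩ fun a => (h₀ a).symm,
    fun t a => congrFun (hπ.liftHomotopy_lifts H _ _) (t, a), hπ.liftHomotopy_zero H _ _⟩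

end GeometricRealization

/-- Let `E` be a connected topological graph whose geometric realization
`R = R(E)` is locally path-connected and semi-locally simply connected, and let
`π : R̃ → R` be the universal covering.  With `Ẽ⁰ = π⁻¹(E⁰)` and `Ẽ¹ = π⁻¹(E¹ × {1/2})`,
defining `s̃ et` (resp. `r̃ et`) as the endpoint of the lift starting at `et` of the path
`t ↦ (e, (1-t)/2)` (resp. `t ↦ (e, (1+t)/2)`), where `π et = (e, 1/2)`, yields well-defined
continuous maps `s̃, r̃ : Ẽ¹ → Ẽ⁰` making `(Ẽ⁰, Ẽ¹, s̃, r̃)` a topological graph covering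
`E`. -/
theorem stmt10 {E0 E1 Rt : Type*} [TopologicalSpace E0] [TopologicalSpace E1]
    [T2Space E0] [T2Space E1]
    [TopologicalSpace Rt]
    (s r : E1 → E0) (hscont : Continuous s) (hrcont : Continuous r)
    -- `π : R̃ → R(E)` is the universal covering
    (π : Rt → Quot (glueRel s r)) (hπ : IsCoveringMap π) :
    ∃ (p0 : {p : Rt // ∃ v : E0, π p = Quot.mk (glueRel s r) (Sum.inr v)} → E0)
      (p1 : {p : Rt // ∃ e : E1,
        π p = Quot.mk (glueRel s r) (Sum.inl (e, ⟨1/2, by norm_num⟩))} → E1)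
      (st rt : {p : Rt // ∃ e : E1,
          π p = Quot.mk (glueRel s r) (Sum.inl (e, ⟨1/2, by norm_num⟩))} →
        {p : Rt // ∃ v : E0, π p = Quot.mk (glueRel s r) (Sum.inr v)}),
      -- `p0` and `p1` are the restrictions of `π` along the canonical embeddings
      (∀ vt, π vt.1 = Quot.mk (glueRel s r) (Sum.inr (p0 vt))) ∧
      (∀ et, π et.1 = Quot.mk (glueRel s r) (Sum.inl (p1 et, ⟨1/2, by norm_num⟩))) ∧
      -- `s̃ et` is the endpoint of the lift starting at `et` of the path down to `(e,0) ∼ s e`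
      (∀ et, ∃ γ : C(unitInterval, Rt),
        (∀ u : unitInterval, π (γ u) = Quot.mk (glueRel s r)
          (Sum.inl (p1 et, ⟨(u : ℝ)/2, by
            have h1 := u.2.1; have h2 := u.2.2
            constructor <;> nlinarith⟩))) ∧
        γ 1 = et.1 ∧ γ 0 = (st et).1) ∧
      -- `r̃ et` is the endpoint of the lift starting at `et` of the path up to `(e,1) ∼ r e`
      (∀ et, ∃ γ : C(unitInterval, Rt),
        (∀ u : unitInterval, π (γ u) = Quot.mk (glueRel s r)
          (Sum.inl (p1 et, ⟨(1 + (u : ℝ))/2, by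
            have h1 := u.2.1; have h2 := u.2.2
            constructor <;> nlinarith⟩))) ∧
        γ 0 = et.1 ∧ γ 1 = (rt et).1) ∧
      -- these are continuous maps
      Continuous st ∧ Continuous rt ∧
      -- and `(p0, p1)` is a graph covering of `E`
      IsCoveringMap p0 ∧ IsCoveringMap p1 ∧
      (∀ et, p0 (st et) = s (p1 et)) ∧ (∀ et, p0 (rt et) = r (p1 et)) := by
  have hV := isEmbedding_glue_vertex s r hscont hrcont
  obtain ⟨p0, hp0, hp0cov⟩ := hπ.exists_pullback_of_isEmbedding hV
  obtain ⟨p1, hp1, hp1cov⟩ :=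
    hπ.exists_pullback_of_isEmbedding (isEmbedding_glue_midpoint s r)
  -- the path `u ↦ (e, u/2)` of the statement, run backwards so that it starts at the midpoint
  obtain ⟨Ls, hLs, hLs0⟩ := hπ.exists_lift_edgePath hp1cov.continuous
    (φ := fun t => ⟨(σ t : ℝ) / 2, div_mem (nonneg _) zero_le_two (by linarith [le_one (σ t)])⟩)
    (by fun_prop) continuous_subtype_val (fun et => by simpa using hp1 et)
  obtain ⟨Lr, hLr, hLr0⟩ := hπ.exists_lift_edgePath hp1cov.continuous
    (φ := fun t => ⟨(1 + t) / 2,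
      div_mem (by linarith [nonneg t]) zero_le_two (by linarith [le_one t])⟩)
    (by fun_prop) continuous_subtype_val (fun et => by simpa using hp1 et)
  have hs_end (et) : π (Ls (1, et)) = Quot.mk (glueRel s r) (Sum.inr (s (p1 et))) :=
    (hLs 1 et).trans <| by
      convert Quot.sound (glueRel.src (s := s) (r := r) (p1 et)) using 4; ext; simp
  have hr_end (et) : π (Lr (1, et)) = Quot.mk (glueRel s r) (Sum.inr (r (p1 et))) :=
    (hLr 1 et).trans <| by
      convert Quot.sound (glueRel.rng (s := s) (r := r) (p1 et)) using 4; ext; norm_num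
  refine ⟨p0, p1, fun et => ⟨Ls (1, et), _, hs_end et⟩, fun et => ⟨Lr (1, et), _, hr_end et⟩,
    hp0, hp1,
    fun et => ⟨⟨fun u => Ls (σ u, et), by fun_prop⟩, fun u => ?_, by simpa using hLs0 et, by simp⟩,
    fun et => ⟨⟨fun u => Lr (u, et), by fun_prop⟩, (hLr · et), hLr0 et, rfl⟩,
    by fun_prop, by fun_prop, hp0cov, hp1cov,
    fun et => hV.injective ((hp0 _).symm.trans (hs_end et)),
    fun et => hV.injective ((hp0 _).symm.trans (hr_end et))⟩
  simp [hLs]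
end

section
/- Let $A$ be a C*-algebra and $\kappa : C \to M(A)$ a nondegenerate *-homomorphism from a C*-algebra $C$ into the multiplier algebra of $A$. Define $M_C(A) = \{ m \in M(A) : \kappa(C) m \subseteq A \text{ and } m \kappa(C) \subseteq A \}$. Then $M_C(A)$ is a C*-subalgebra of $M(A)$ containing $A$, and it is an $M(C)$-subbimodule of $M(A)$, i.e., $\bar\kappa(M(C)) M_C(A) \subseteq M_C(A)$ and $M_C(A) \bar\kappa(M(C)) \subseteq M_C(A)$, where $\bar\kappa : M(C) \to M(A)$ is the canonical extension of $\kappa$. -/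
open scoped MultiplierAlgebra

namespace Stmt13Aux

variable {A : Type*} [NonUnitalCStarAlgebra A]

lemma cancel_left {w w' : A} (h : ∀ z : A, z * w = z * w') : w = w' := by
  have h2 : star (w - w') * (w - w') = 0 := by
    rw [mul_sub, h (star (w - w')), sub_self]
  exact sub_eq_zero.mp ((CStarRing.star_mul_self_eq_zero_iff _).mp h2)

lemma cancel_right {w w' : A} (h : ∀ z : A, w * z = w' * z) : w = w' := by
  have h2 : (w - w') * star (w - w') = 0 := by
    rw [sub_mul, h (star (w - w')), sub_self]
  exact sub_eq_zero.mp ((CStarRing.mul_star_self_eq_zero_iff _).mp h2)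

lemma fst_mul (m : 𝓜(ℂ, A)) (a x : A) : m.fst (a * x) = m.fst a * x := by
  apply cancel_left
  intro z
  calc z * m.fst (a * x) = m.snd z * (a * x) := (m.central z (a * x)).symm
    _ = (m.snd z * a) * x := (mul_assoc _ _ _).symm
    _ = (z * m.fst a) * x := by rw [m.central z a]
    _ = z * (m.fst a * x) := mul_assoc _ _ _

lemma snd_mul (m : 𝓜(ℂ, A)) (a x : A) : m.snd (x * a) = x * m.snd a := by
  apply cancel_right
  intro z
  calc m.snd (x * a) * z = (x * a) * m.fst z := m.central (x * a) z
    _ = x * (a * m.fst z) := mul_assoc _ _ _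
    _ = x * (m.snd a * z) := by rw [m.central a z]
    _ = (x * m.snd a) * z := (mul_assoc _ _ _).symm

lemma mul_coe (m : 𝓜(ℂ, A)) (a : A) : m * (a : 𝓜(ℂ, A)) = ((m.fst a : A) : 𝓜(ℂ, A)) := by
  refine DoubleCentralizer.ext _ _ _ _ (Prod.ext ?_ ?_)
  · ext x
    show m.fst (a * x) = m.fst a * x
    exact fst_mul m a x
  · ext x
    show m.snd x * a = x * m.fst a
    exact m.central x a

lemma coe_mul (a : A) (m : 𝓜(ℂ, A)) : (a : 𝓜(ℂ, A)) * m = ((m.snd a : A) : 𝓜(ℂ, A)) := by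
  refine DoubleCentralizer.ext _ _ _ _ (Prod.ext ?_ ?_)
  · ext x
    show a * m.fst x = m.snd a * x
    exact (m.central a x).symm
  · ext x
    show m.snd (x * a) = x * m.snd a
    exact snd_mul m a x

lemma norm_coe (a : A) : ‖(a : 𝓜(ℂ, A))‖ = ‖a‖ := by
  rw [← DoubleCentralizer.norm_fst, DoubleCentralizer.coe_fst,
    ContinuousLinearMap.opNorm_mul_apply]

lemma isClosed_range_coe : IsClosed (Set.range ((↑) : A → 𝓜(ℂ, A))) := by
  have hiso : Isometry ((↑) : A → 𝓜(ℂ, A)) :=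
    AddMonoidHomClass.isometry_of_norm (DoubleCentralizer.coeHom (𝕜 := ℂ) (A := A)) norm_coe
  exact hiso.isClosedEmbedding.isClosed_range

/-- `Set.range coe` as a submodule. -/
noncomputable def rangeCoe : Submodule ℂ 𝓜(ℂ, A) where
  carrier := Set.range ((↑) : A → 𝓜(ℂ, A))
  add_mem' := by rintro _ _ ⟨a, rfl⟩ ⟨b, rfl⟩; exact ⟨a + b, map_add (DoubleCentralizer.coeHom (𝕜 := ℂ) (A := A)) a b⟩
  zero_mem' := ⟨0, map_zero (DoubleCentralizer.coeHom (𝕜 := ℂ) (A := A))⟩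
  smul_mem' := by rintro z _ ⟨a, rfl⟩; exact ⟨z • a, map_smul (DoubleCentralizer.coeHom (𝕜 := ℂ) (A := A)) z a⟩

section Main

variable {A C : Type*} [NonUnitalCStarAlgebra A] [NonUnitalCStarAlgebra C]

lemma star_coe (a : A) : star (a : 𝓜(ℂ, A)) = ((star a : A) : 𝓜(ℂ, A)) :=
  (map_star (DoubleCentralizer.coeHom (𝕜 := ℂ) (A := A)) a).symm

lemma left_absorb (κ : C →⋆ₙₐ[ℂ] 𝓜(ℂ, A))
    (hnd : ∀ a : A, (a : 𝓜(ℂ, A)) ∈ closure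
      (Submodule.span ℂ {x : 𝓜(ℂ, A) | ∃ (c : C) (b : A), x = κ c * (b : 𝓜(ℂ, A))} : Set 𝓜(ℂ, A)))
    (κbar : 𝓜(ℂ, C) →⋆ₙₐ[ℂ] 𝓜(ℂ, A))
    (hext : ∀ c : C, κbar ((c : 𝓜(ℂ, C))) = κ c) (n : 𝓜(ℂ, C)) (a : A) :
    ∃ a' : A, κbar n * (a : 𝓜(ℂ, A)) = (a' : 𝓜(ℂ, A)) := by
  set S0 : Set 𝓜(ℂ, A) := {x : 𝓜(ℂ, A) | ∃ (c : C) (b : A), x = κ c * (b : 𝓜(ℂ, A))}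
  have hsub : (Submodule.span ℂ S0) ≤
      (rangeCoe (A := A)).comap (LinearMap.mulLeft ℂ (κbar n)) := by
    rw [Submodule.span_le]
    rintro x ⟨c, b, rfl⟩
    have hkc : κbar n * κ c = κ (n.fst c) := by
      rw [← hext c, ← map_mul κbar, mul_coe n c, hext]
    show κbar n * (κ c * (b : 𝓜(ℂ, A))) ∈ Set.range ((↑) : A → 𝓜(ℂ, A))
    rw [← mul_assoc, hkc, mul_coe]
    exact ⟨_, rfl⟩
  have hcont : Continuous (fun x : 𝓜(ℂ, A) => κbar n * x) := continuous_const.mul continuous_id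
  have hmem : κbar n * (a : 𝓜(ℂ, A)) ∈ closure (Set.range ((↑) : A → 𝓜(ℂ, A))) :=
    map_mem_closure hcont (hnd a) (fun x hx => hsub hx)
  rw [(isClosed_range_coe (A := A)).closure_eq] at hmem
  obtain ⟨a', ha'⟩ := hmem
  exact ⟨a', ha'.symm⟩

lemma right_absorb (κ : C →⋆ₙₐ[ℂ] 𝓜(ℂ, A))
    (hnd : ∀ a : A, (a : 𝓜(ℂ, A)) ∈ closure
      (Submodule.span ℂ {x : 𝓜(ℂ, A) | ∃ (c : C) (b : A), x = κ c * (b : 𝓜(ℂ, A))} : Set 𝓜(ℂ, A)))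
    (κbar : 𝓜(ℂ, C) →⋆ₙₐ[ℂ] 𝓜(ℂ, A))
    (hext : ∀ c : C, κbar ((c : 𝓜(ℂ, C))) = κ c) (n : 𝓜(ℂ, C)) (a : A) :
    ∃ a' : A, (a : 𝓜(ℂ, A)) * κbar n = (a' : 𝓜(ℂ, A)) := by
  obtain ⟨a', ha'⟩ := left_absorb κ hnd κbar hext (star n) (star a)
  refine ⟨star a', ?_⟩
  calc (a : 𝓜(ℂ, A)) * κbar n
      = star (star (κbar n) * star (a : 𝓜(ℂ, A))) := by rw [← star_mul, star_star]
    _ = star (κbar (star n) * ((star a : A) : 𝓜(ℂ, A))) := by rw [map_star, star_coe]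
    _ = star ((a' : A) : 𝓜(ℂ, A)) := by rw [ha']
    _ = ((star a' : A) : 𝓜(ℂ, A)) := star_coe a'


lemma coe_add' (a b : A) : ((a + b : A) : 𝓜(ℂ, A)) = (a : 𝓜(ℂ, A)) + (b : 𝓜(ℂ, A)) :=
  map_add (DoubleCentralizer.coeHom (𝕜 := ℂ) (A := A)) a b

lemma coe_smul' (z : ℂ) (a : A) : ((z • a : A) : 𝓜(ℂ, A)) = z • (a : 𝓜(ℂ, A)) :=
  map_smul (DoubleCentralizer.coeHom (𝕜 := ℂ) (A := A)) z a

lemma coe_zero' : ((0 : A) : 𝓜(ℂ, A)) = 0 :=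
  map_zero (DoubleCentralizer.coeHom (𝕜 := ℂ) (A := A))

/-- The relative multiplier algebra as a star subalgebra. -/
noncomputable def mAlg (κ : C →⋆ₙₐ[ℂ] 𝓜(ℂ, A)) : NonUnitalStarSubalgebra ℂ 𝓜(ℂ, A) where
  carrier := {m : 𝓜(ℂ, A) | ∀ c : C,
    (∃ a : A, κ c * m = (a : 𝓜(ℂ, A))) ∧ (∃ a : A, m * κ c = (a : 𝓜(ℂ, A)))}
  zero_mem' := fun c => ⟨⟨0, by rw [mul_zero, coe_zero']⟩, ⟨0, by rw [zero_mul, coe_zero']⟩⟩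
  add_mem' := fun {x y} hx hy c => by
    obtain ⟨⟨a1, h1⟩, ⟨a2, h2⟩⟩ := hx c
    obtain ⟨⟨b1, g1⟩, ⟨b2, g2⟩⟩ := hy c
    exact ⟨⟨a1 + b1, by rw [mul_add, h1, g1, coe_add']⟩,
      ⟨a2 + b2, by rw [add_mul, h2, g2, coe_add']⟩⟩
  mul_mem' := fun {x y} hx hy c => by
    obtain ⟨⟨a1, h1⟩, _⟩ := hx c
    obtain ⟨_, ⟨b2, g2⟩⟩ := hy c
    exact ⟨⟨y.snd a1, by rw [← mul_assoc, h1, coe_mul]⟩,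
      ⟨x.fst b2, by rw [mul_assoc, g2, mul_coe]⟩⟩
  smul_mem' := fun z x hx c => by
    obtain ⟨⟨a1, h1⟩, ⟨a2, h2⟩⟩ := hx c
    exact ⟨⟨z • a1, by rw [mul_smul_comm, h1, coe_smul']⟩,
      ⟨z • a2, by rw [smul_mul_assoc, h2, coe_smul']⟩⟩
  star_mem' := fun {x} hx c => by
    obtain ⟨⟨a1, h1⟩, ⟨a2, h2⟩⟩ := hx (star c)
    constructor
    · refine ⟨star a2, ?_⟩
      have : κ c * star x = star (x * κ (star c)) := by
        rw [star_mul, map_star, star_star]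
      rw [this, h2, star_coe]
    · refine ⟨star a1, ?_⟩
      have : star x * κ c = star (κ (star c) * x) := by
        rw [star_mul, map_star, star_star]
      rw [this, h1, star_coe]

lemma isClosed_mAlg (κ : C →⋆ₙₐ[ℂ] 𝓜(ℂ, A)) : IsClosed ((mAlg κ : Set 𝓜(ℂ, A))) := by
  have heq : (mAlg κ : Set 𝓜(ℂ, A)) = ⋂ c : C,
      ((fun m => κ c * m) ⁻¹' Set.range ((↑) : A → 𝓜(ℂ, A))) ∩
      ((fun m => m * κ c) ⁻¹' Set.range ((↑) : A → 𝓜(ℂ, A))) := by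
    ext m
    simp only [Set.mem_iInter, Set.mem_inter_iff, Set.mem_preimage, Set.mem_range]
    constructor
    · intro h c
      obtain ⟨⟨a1, h1⟩, ⟨a2, h2⟩⟩ := h c
      exact ⟨⟨a1, h1.symm⟩, ⟨a2, h2.symm⟩⟩
    · intro h c
      obtain ⟨⟨a1, h1⟩, ⟨a2, h2⟩⟩ := h c
      exact ⟨⟨a1, h1.symm⟩, ⟨a2, h2.symm⟩⟩
  rw [heq]
  exact isClosed_iInter fun c =>
    (isClosed_range_coe.preimage (continuous_const.mul continuous_id)).inter
      (isClosed_range_coe.preimage (continuous_id.mul continuous_const))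

end Main

end Stmt13Aux


open Stmt13Aux in
/-- Let `κ : C → M(A)` be a nondegenerate *-homomorphism into the multiplier
algebra of a C*-algebra `A`, and let
`M_C(A) = {m ∈ M(A) : κ(C)m ⊆ A and mκ(C) ⊆ A}`.  Then `M_C(A)` is a C*-subalgebra (a
closed star-subalgebra) of `M(A)` containing `A`, and it is an `M(C)`-subbimodule of
`M(A)`: `κ̄(M(C)) M_C(A) ⊆ M_C(A)` and `M_C(A) κ̄(M(C)) ⊆ M_C(A)` for the canonical
extension `κ̄ : M(C) → M(A)` of `κ`. -/
theorem stmt13 {A C : Type*} [NonUnitalCStarAlgebra A] [NonUnitalCStarAlgebra C]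
    (κ : C →⋆ₙₐ[ℂ] 𝓜(ℂ, A))
    -- `κ` is nondegenerate: `κ(C)A` is dense in `A`
    (hnd : ∀ a : A, (a : 𝓜(ℂ, A)) ∈ closure
      (Submodule.span ℂ {x : 𝓜(ℂ, A) | ∃ (c : C) (b : A), x = κ c * (b : 𝓜(ℂ, A))} : Set 𝓜(ℂ, A)))
    -- `κ̄` is an extension of `κ` to the multiplier algebras
    (κbar : 𝓜(ℂ, C) →⋆ₙₐ[ℂ] 𝓜(ℂ, A))
    (hext : ∀ c : C, κbar ((c : 𝓜(ℂ, C))) = κ c) :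
    (∃ S : NonUnitalStarSubalgebra ℂ 𝓜(ℂ, A),
        (S : Set 𝓜(ℂ, A)) = {m : 𝓜(ℂ, A) | ∀ c : C,
          (∃ a : A, κ c * m = (a : 𝓜(ℂ, A))) ∧ (∃ a : A, m * κ c = (a : 𝓜(ℂ, A)))} ∧
        IsClosed (S : Set 𝓜(ℂ, A))) ∧
    (∀ a : A, (a : 𝓜(ℂ, A)) ∈ {m : 𝓜(ℂ, A) | ∀ c : C,
        (∃ a' : A, κ c * m = (a' : 𝓜(ℂ, A))) ∧ (∃ a' : A, m * κ c = (a' : 𝓜(ℂ, A)))}) ∧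
    (∀ (n : 𝓜(ℂ, C)) (m : 𝓜(ℂ, A)),
      m ∈ {m : 𝓜(ℂ, A) | ∀ c : C,
        (∃ a : A, κ c * m = (a : 𝓜(ℂ, A))) ∧ (∃ a : A, m * κ c = (a : 𝓜(ℂ, A)))} →
      κbar n * m ∈ {m : 𝓜(ℂ, A) | ∀ c : C,
        (∃ a : A, κ c * m = (a : 𝓜(ℂ, A))) ∧ (∃ a : A, m * κ c = (a : 𝓜(ℂ, A)))} ∧
      m * κbar n ∈ {m : 𝓜(ℂ, A) | ∀ c : C,
        (∃ a : A, κ c * m = (a : 𝓜(ℂ, A))) ∧ (∃ a : A, m * κ c = (a : 𝓜(ℂ, A)))}) := by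
  refine ⟨⟨mAlg κ, rfl, isClosed_mAlg κ⟩, ?_, ?_⟩
  · intro a c
    exact ⟨⟨(κ c).fst a, mul_coe _ _⟩, ⟨(κ c).snd a, coe_mul _ _⟩⟩
  · intro n m hm
    constructor
    · intro c
      constructor
      · have hkc : κ c * κbar n = κ (n.snd c) := by
          rw [← hext c, ← map_mul, coe_mul, hext]
        obtain ⟨a, ha⟩ := (hm (n.snd c)).1
        exact ⟨a, by rw [← mul_assoc, hkc, ha]⟩
      · obtain ⟨a, ha⟩ := (hm c).2
        obtain ⟨a', ha'⟩ := left_absorb κ hnd κbar hext n a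
        exact ⟨a', by rw [mul_assoc, ha, ha']⟩
    · intro c
      constructor
      · obtain ⟨a, ha⟩ := (hm c).1
        obtain ⟨a', ha'⟩ := right_absorb κ hnd κbar hext n a
        exact ⟨a', by rw [← mul_assoc, ha, ha']⟩
      · have hkc : κbar n * κ c = κ (n.fst c) := by
          rw [← hext c, ← map_mul, mul_coe, hext]
        obtain ⟨a, ha⟩ := (hm (n.fst c)).2
        exact ⟨a, by rw [mul_assoc, hkc, ha]⟩
end
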